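/- For every integer k ≥ 1, if W satisfies the minimal constraints and the powers W^j for 1 ≤ j ≤ k+1 are integrable, then ∫ W(q,p) · (1 − π·W(q,p))^k dq dp ≥ (1 − μ/2)^k, where μ is the purity of W. -/

import Mathlib

/-!
Under the probability density `W`, the variable `π W` takes values in `[0, 1]` and has mean
`π ∫ W² = μ / 2`, so the bound is Jensen's inequality for the convex `x ↦ (1 - x) ^ k`.
Both integrands are `W` times a function of `π W` bounded by `1`, hence integrable.
-/

open Real MeasureTheory

theorem convexOn_one_sub_pow (k : ℕ) : ConvexOn ℝ (Set.Iic 1) fun x : ℝ => (1 - x) ^ k := by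
  have hφ (x : ℝ) : AffineMap.lineMap (1 : ℝ) 0 x = 1 - x := by
    simp [AffineMap.lineMap_apply_ring', sub_eq_neg_add]
  have h := (convexOn_pow k).comp_affineMap (AffineMap.lineMap (1 : ℝ) 0)
  simp only [Set.preimage, hφ, Function.comp_def, Set.mem_Ici, sub_nonneg] at h
  exact h

namespace MeasureTheory

variable {α E : Type*} [MeasurableSpace α] {μ : Measure α} {w : α → ℝ}
  [NormedAddCommGroup E] [NormedSpace ℝ E]

theorem integral_withDensity_ofReal (hw : AEMeasurable w μ) (hw0 : 0 ≤ᵐ[μ] w) (g : α → E) :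
    ∫ x, g x ∂μ.withDensity (fun x => ENNReal.ofReal (w x)) = ∫ x, w x • g x ∂μ := by
  rw [integral_withDensity_eq_integral_toReal_smul₀ hw.ennreal_ofReal
    (.of_forall fun _ => ENNReal.ofReal_lt_top)]
  refine integral_congr_ae ?_
  filter_upwards [hw0] with x hx
  rw [ENNReal.toReal_ofReal hx]

theorem integrable_withDensity_ofReal_iff (hw : AEMeasurable w μ) (hw0 : 0 ≤ᵐ[μ] w) {g : α → E} :
    Integrable g (μ.withDensity fun x => ENNReal.ofReal (w x)) ↔
      Integrable (fun x => w x • g x) μ := by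
  rw [integrable_withDensity_iff_integrable_smul₀' hw.ennreal_ofReal
    (.of_forall fun _ => ENNReal.ofReal_lt_top)]
  refine integrable_congr ?_
  filter_upwards [hw0] with x hx
  rw [ENNReal.toReal_ofReal hx]

theorem isProbabilityMeasure_withDensity_ofReal (hw : Integrable w μ) (hw0 : 0 ≤ᵐ[μ] w)
    (hw1 : ∫ x, w x ∂μ = 1) :
    IsProbabilityMeasure (μ.withDensity fun x => ENNReal.ofReal (w x)) := by
  constructor
  rw [withDensity_apply _ MeasurableSet.univ, setLIntegral_univ,
    ← ofReal_integral_eq_lintegral_ofReal hw hw0, hw1, ENNReal.ofReal_one]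

/-- Jensen's inequality for the probability measure with density `w` with respect to `μ`. -/
theorem _root_.ConvexOn.map_integral_smul_le [CompleteSpace E] {s : Set E} {f : α → E}
    {g : E → ℝ} (hg : ConvexOn ℝ s g) (hgc : ContinuousOn g s) (hsc : IsClosed s)
    (hw : Integrable w μ) (hw0 : 0 ≤ᵐ[μ] w) (hw1 : ∫ x, w x ∂μ = 1)
    (hfs : ∀ᵐ x ∂μ, f x ∈ s) (hfi : Integrable (fun x => w x • f x) μ)
    (hgi : Integrable (fun x => w x • g (f x)) μ) :
    g (∫ x, w x • f x ∂μ) ≤ ∫ x, w x • g (f x) ∂μ := by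
  have := isProbabilityMeasure_withDensity_ofReal hw hw0 hw1
  have hwm := hw.aemeasurable
  rw [← integral_withDensity_ofReal hwm hw0, ← integral_withDensity_ofReal hwm hw0]
  rw [← integrable_withDensity_ofReal_iff hwm hw0] at hfi hgi
  exact hg.map_integral_le hgc hsc (withDensity_absolutelyContinuous μ _ |>.ae_le hfs) hfi hgi

end MeasureTheory

theorem jensen_moment_bound (k : ℕ)
    (W : ℝ × ℝ → ℝ)
    (hpos : ∀ z, 0 ≤ W z)
    (hnorm : ∫ z, W z = 1)
    (hbound : ∀ z, Real.pi * W z ≤ 1)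
    (hpow : ∀ j : ℕ, 1 ≤ j → j ≤ k + 1 → Integrable (fun z => (W z) ^ j)) :
    (∫ z, W z * (1 - Real.pi * W z) ^ k)
      ≥ (1 - (2 * Real.pi * ∫ z, (W z) ^ 2) / 2) ^ k := by
  have hW : Integrable W := by simpa using hpow 1 le_rfl (by omega)
  have hπW (z : ℝ × ℝ) : π * W z ∈ Set.Icc 0 1 := ⟨mul_nonneg pi_pos.le (hpos z), hbound z⟩
  have hmean_int : Integrable (fun z => W z * (π * W z)) := by
    refine hW.mul_bdd (c := 1) (hW.1.const_mul π) (.of_forall fun z => ?_)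
    rw [Real.norm_of_nonneg (hπW z).1]
    exact (hπW z).2
  have hmoment_int : Integrable (fun z => W z * (1 - π * W z) ^ k) := by
    refine hW.mul_bdd (c := 1) ((aestronglyMeasurable_const.sub (hW.1.const_mul π)).pow k)
      (.of_forall fun z => ?_)
    rw [norm_pow, Real.norm_of_nonneg (sub_nonneg.2 (hπW z).2)]
    exact pow_le_one₀ (sub_nonneg.2 (hπW z).2) (sub_le_self _ (hπW z).1)
  have hmean : ∫ z, W z * (π * W z) = 2 * π * (∫ z, W z ^ 2) / 2 := by
    rw [mul_div_right_comm, mul_div_cancel_left₀ _ two_ne_zero, ← integral_const_mul]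
    simp only [pow_two, mul_left_comm]
  have h := (convexOn_one_sub_pow k).map_integral_smul_le
    ((continuous_const.sub continuous_id).pow k).continuousOn isClosed_Iic hW
    (.of_forall hpos) hnorm (.of_forall hbound) hmean_int hmoment_int
  simpa only [smul_eq_mul, hmean] using h
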